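/- If v is a valuation function on the self-adjoint part of a von Neumann algebra R and v' its canonical extension to R, then v' is a quasi-state: v' is linear and positive on the abelian C*-subalgebra generated by each self-adjoint B and the identity, v'(A₁ + iA₂) = v'(A₁) + i·v'(A₂) for self-adjoint A₁, A₂, and v'(I) = 1. -/

import Mathlib

open scoped ComplexOrder

/-- A valuation function on the self-adjoint part of a (von Neumann / C*) algebra `A`:
it assigns to each self-adjoint element a point of its spectrum and commutes with
(continuous, standing in for Borel) functional calculus (the FUNC principle). -/
def IsValuation {A : Type*} [CStarAlgebra A] (v : A → ℝ) : Prop :=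
  (∀ a : A, IsSelfAdjoint a → v a ∈ spectrum ℝ a) ∧
  (∀ a : A, IsSelfAdjoint a → ∀ f : ℝ → ℝ, ContinuousOn f (spectrum ℝ a) →
    v (cfc f a) = f (v a))

/-- The canonical extension `v'` of a valuation function `v` to the whole algebra,
`v'(A₁ + iA₂) = v(A₁) + i v(A₂)`, via the decomposition into self-adjoint parts. -/
noncomputable def valExt {A : Type*} [CStarAlgebra A] (v : A → ℝ) (b : A) : ℂ :=
  (v ((realPart b : A)) : ℂ) + Complex.I * (v ((imaginaryPart b : A)) : ℂ)
/-- A quasi-state of a unital C*-algebra `A` (Aarnes): a functional `ρ : A → ℂ` that is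
linear and positive on the abelian C*-subalgebra generated by each self-adjoint element
and the identity, respects the decomposition into self-adjoint parts, and maps `1` to `1`. -/
def IsQuasiState {A : Type*} [CStarAlgebra A] [PartialOrder A] [StarOrderedRing A] (ρ : A → ℂ) : Prop :=
  (∀ b : A, IsSelfAdjoint b →
    (∀ x ∈ StarAlgebra.elemental ℂ b, ∀ y ∈ StarAlgebra.elemental ℂ b,
      ρ (x + y) = ρ x + ρ y) ∧
    (∀ (c : ℂ), ∀ x ∈ StarAlgebra.elemental ℂ b, ρ (c • x) = c * ρ x) ∧
    (∀ x ∈ StarAlgebra.elemental ℂ b, 0 ≤ x → ∃ r : ℝ, 0 ≤ r ∧ ρ x = r)) ∧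
  (∀ a₁ a₂ : A, IsSelfAdjoint a₁ → IsSelfAdjoint a₂ →
    ρ (a₁ + Complex.I • a₂) = ρ a₁ + Complex.I * ρ a₂) ∧
  ρ 1 = 1

/-! On the C*-algebra generated by a self-adjoint `b`, every element is `cfc f b` with `f`
continuous on the spectrum. Splitting `f` into real and imaginary parts and applying the
functional-calculus rule of `v` to each gives `valExt v (cfc f b) = f (v b)`: on that algebra
`valExt v` is evaluation at the point `v b` of the spectrum, hence linear. Positivity holds
because `v a` lies in the spectrum of `a`. -/

open Complex
open scoped ComplexStarModule

lemma realPart_add_I_smul {A : Type*} [AddCommGroup A] [Module ℂ A] [StarAddMonoid A]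
    [StarModule ℂ A] {a₁ a₂ : A} (h₁ : IsSelfAdjoint a₁) (h₂ : IsSelfAdjoint a₂) :
    (ℜ (a₁ + I • a₂) : A) = a₁ := by
  simp [realPart_I_smul, h₁.coe_realPart, h₂.imaginaryPart]

lemma imaginaryPart_add_I_smul {A : Type*} [AddCommGroup A] [Module ℂ A] [StarAddMonoid A]
    [StarModule ℂ A] {a₁ a₂ : A} (h₁ : IsSelfAdjoint a₁) (h₂ : IsSelfAdjoint a₂) :
    (ℑ (a₁ + I • a₂) : A) = a₂ := by
  simp [imaginaryPart_I_smul, h₂.coe_realPart, h₁.imaginaryPart]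

section CStarAlgebra

variable {A : Type*} [CStarAlgebra A]

lemma exists_continuousOn_cfc_eq_of_mem_elemental {b : A} [IsStarNormal b] {x : A}
    (hx : x ∈ StarAlgebra.elemental ℂ b) :
    ∃ f : ℂ → ℂ, ContinuousOn f (spectrum ℂ b) ∧ cfc f b = x := by
  obtain ⟨f, rfl⟩ : ∃ f, cfc f b = x := by rwa [← Set.mem_range, range_cfc ℂ ‹IsStarNormal b›]
  by_cases hf : ContinuousOn f (spectrum ℂ b)
  · exact ⟨f, hf, rfl⟩
  · -- `cfc` sends a function discontinuous on the spectrum to `0`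
    exact ⟨0, continuousOn_const, by rw [cfc_zero, cfc_apply_of_not_continuousOn b hf]⟩

lemma cfc_eq_cfc_re_add_I_smul_cfc_im {b : A} (hb : IsSelfAdjoint b) (f : ℂ → ℂ)
    (hf : ContinuousOn f (spectrum ℂ b)) :
    cfc f b = cfc (fun t : ℝ ↦ (f t).re) b + I • cfc (fun t : ℝ ↦ (f t).im) b := by
  have : IsStarNormal b := hb.isStarNormal
  have real_cfc (g : ℂ → ℝ) : cfc (fun t : ℝ ↦ g t) b = cfc (fun z ↦ (g z : ℂ)) b := by
    rw [cfc_real_eq_complex _ hb]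
    refine cfc_congr fun z hz ↦ ?_
    conv_rhs => rw [hb.mem_spectrum_eq_re hz]
  rw [real_cfc fun z ↦ (f z).re, real_cfc fun z ↦ (f z).im, ← cfc_smul _ _ _ (by fun_prop),
    ← cfc_add _ _ _ (by fun_prop) (by fun_prop)]
  exact cfc_congr fun z _ ↦ by simp [mul_comm I, re_add_im]

lemma valExt_add_I_smul (v : A → ℝ) {a₁ a₂ : A} (h₁ : IsSelfAdjoint a₁)
    (h₂ : IsSelfAdjoint a₂) : valExt v (a₁ + I • a₂) = v a₁ + I * v a₂ := by
  rw [valExt, realPart_add_I_smul h₁ h₂, imaginaryPart_add_I_smul h₁ h₂]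

namespace IsValuation

variable {v : A → ℝ}

lemma apply_algebraMap (hv : IsValuation v) (r : ℝ) : v (algebraMap ℝ A r) = r := by
  simpa [cfc_const r (0 : A)] using hv.2 0 (.zero A) (fun _ ↦ r) continuousOn_const

lemma nonneg_of_nonneg [PartialOrder A] [StarOrderedRing A] (hv : IsValuation v) {a : A}
    (ha : 0 ≤ a) : 0 ≤ v a :=
  (StarOrderedRing.nonneg_iff_spectrum_nonneg a ha.isSelfAdjoint).mp ha _
    (hv.1 a ha.isSelfAdjoint)

lemma valExt_of_isSelfAdjoint (hv : IsValuation v) {a : A} (ha : IsSelfAdjoint a) :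
    valExt v a = v a := by
  have hv_zero : v 0 = 0 := by simpa using hv.apply_algebraMap 0
  simpa [hv_zero] using valExt_add_I_smul v ha (.zero A)

lemma valExt_cfc (hv : IsValuation v) {b : A} (hb : IsSelfAdjoint b) (f : ℂ → ℂ)
    (hf : ContinuousOn f (spectrum ℂ b)) : valExt v (cfc f b) = f (v b) := by
  have hf_real : ContinuousOn (fun t : ℝ ↦ f t) (spectrum ℝ b) :=
    hf.comp continuous_ofReal.continuousOn fun _ ht ↦ spectrum.algebraMap_mem ℂ ht
  rw [cfc_eq_cfc_re_add_I_smul_cfc_im hb f hf,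
    valExt_add_I_smul v (cfc_predicate ..) (cfc_predicate ..),
    hv.2 b hb (fun t ↦ (f t).re) (continuous_re.comp_continuousOn hf_real),
    hv.2 b hb (fun t ↦ (f t).im) (continuous_im.comp_continuousOn hf_real), mul_comm]
  exact re_add_im _

end IsValuation

end CStarAlgebra

/-- the canonical extension `v'` of a valuation function `v` is a quasi-state. -/
theorem valExt_isQuasiState {A : Type*} [CStarAlgebra A] [PartialOrder A] [StarOrderedRing A]
    (v : A → ℝ) (hv : IsValuation v) :
    IsQuasiState (valExt v) := by
  refine ⟨fun b hb ↦ ?_, fun a₁ a₂ h₁ h₂ ↦ ?_, ?_⟩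
  · have : IsStarNormal b := hb.isStarNormal
    refine ⟨fun x hx y hy ↦ ?_, fun c x hx ↦ ?_, fun x _ hx ↦ ?_⟩
    · obtain ⟨f, hf, rfl⟩ := exists_continuousOn_cfc_eq_of_mem_elemental hx
      obtain ⟨g, hg, rfl⟩ := exists_continuousOn_cfc_eq_of_mem_elemental hy
      rw [← cfc_add .., hv.valExt_cfc hb (fun z ↦ f z + g z) (hf.add hg), hv.valExt_cfc hb f hf,
        hv.valExt_cfc hb g hg]
    · obtain ⟨f, hf, rfl⟩ := exists_continuousOn_cfc_eq_of_mem_elemental hx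
      rw [← cfc_smul .., hv.valExt_cfc hb (fun z ↦ c • f z) (hf.const_smul c),
        hv.valExt_cfc hb f hf, smul_eq_mul]
    · exact ⟨v x, hv.nonneg_of_nonneg hx, hv.valExt_of_isSelfAdjoint hx.isSelfAdjoint⟩
  · rw [valExt_add_I_smul v h₁ h₂, hv.valExt_of_isSelfAdjoint h₁, hv.valExt_of_isSelfAdjoint h₂]
  · have hv_one : v 1 = 1 := by simpa using hv.apply_algebraMap 1
    rw [hv.valExt_of_isSelfAdjoint (.one A), hv_one, ofReal_one]
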